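/- Let (K, d) be a compact metric space, let γ = (γ₁, …, γₙ) be a system of proper contractions on K, and let φ: K → K be continuous with γ₁, …, γₙ as inverse branches. Assume that K is self-similar with respect to γ and that γ satisfies the measure separation condition in K. Let {uᵢ}_{i=1}^∞ ⊆ C(K) be a countable basis, i.e., for every ξ ∈ C(K) the partial sums Σ_{i=1}^N uᵢ·((L_φ(\overline{uᵢ}·ξ))∘φ) converge to ξ as N → ∞ in the norm ‖η‖₂ := ‖L_φ(|η|²)‖_∞^{1/2}. Then for every N, the operator T_N = Σ_{i=1}^N M_{uᵢ} C_φ C_φ* M_{\overline{uᵢ}} on L²(K, μ^H) satisfies 0 ≤ T_N ≤ I, i.e., T_N is a positive operator and I − T_N is a positive operator. -/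

import Mathlib

/-!
Each summand of `T_N` is `S S*` with `S = M_{uᵢ} C_φ`, because `M_{ūᵢ} = M_{uᵢ}*`; hence
`T_N ≥ 0`. For `T_N ≤ I` it suffices, by density, to test `⟨T_N ξ, ξ⟩ ≤ ‖ξ‖²` on continuous
`ξ`. Self-similarity of `μ^H` together with `φ ∘ γᵢ = id` shows that `C_φ*` acts on `C(K)` as
the transfer operator, so `T_N ξ` is the `N`-th partial sum of the basis expansion of `ξ`.
Since `∫ |η|² dμ^H = ∫ L_φ(|η|²) dμ^H`, the `L²` norm is dominated by `‖·‖₂`, so `T_N ξ → ξ`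
in `L²`; as `⟨T_N ξ, ξ⟩` is nondecreasing in `N`, it stays below its limit `‖ξ‖²`.
-/

open MeasureTheory Set Filter Topology
open scoped ENNReal NNReal

noncomputable section

/-- A continuous map `g : K → K` on a metric space is a *proper contraction* if there are
constants `0 < c₁ ≤ c₂ < 1` with `c₁ d(x,y) ≤ d(g x, g y) ≤ c₂ d(x,y)` for all `x, y`. -/
def ProperContraction {K : Type*} [MetricSpace K] (g : K → K) : Prop :=
  ∃ c₁ c₂ : ℝ, 0 < c₁ ∧ c₁ ≤ c₂ ∧ c₂ < 1 ∧
    ∀ x y : K, c₁ * dist x y ≤ dist (g x) (g y) ∧ dist (g x) (g y) ≤ c₂ * dist x y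

/-- `K` is self-similar with respect to the system `γ`: `K = ⋃ i, γ i (K)`. -/
def SelfSimilarSet {K : Type*} [MetricSpace K] {n : ℕ} (γ : Fin n → K → K) : Prop :=
  (⋃ i, γ i '' Set.univ) = Set.univ

/-- `μ` is a self-similar Borel probability measure for the system `γ` with weights `p`. -/
def IsSelfSimilarMeasure {K : Type*} [MetricSpace K] [MeasurableSpace K] {n : ℕ}
    (γ : Fin n → K → K) (p : Fin n → ℝ) (μ : Measure K) : Prop :=
  IsProbabilityMeasure μ ∧
    ∀ E : Set K, MeasurableSet E → μ E = ∑ i, ENNReal.ofReal (p i) * μ (γ i ⁻¹' E)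

/-- `μ` is the Hutchinson measure of the system `γ`: the self-similar probability measure
with all weights equal to `1/n`. -/
def IsHutchinsonMeasure {K : Type*} [MetricSpace K] [MeasurableSpace K] {n : ℕ}
    (γ : Fin n → K → K) (μ : Measure K) : Prop :=
  IsProbabilityMeasure μ ∧
    ∀ E : Set K, MeasurableSet E → μ E = (n : ℝ≥0∞)⁻¹ * ∑ i, μ (γ i ⁻¹' E)

/-- The system `γ` satisfies the measure separation condition: every self-similar measure gives
measure zero to `γ i (K) ∩ γ j (K)` for `i ≠ j`. -/
def MeasureSeparation {K : Type*} [MetricSpace K] [MeasurableSpace K] {n : ℕ}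
    (γ : Fin n → K → K) : Prop :=
  ∀ p : Fin n → ℝ, (∀ i, 0 < p i) → (∑ i, p i) = 1 →
    ∀ μ : Measure K, IsSelfSimilarMeasure γ p μ →
      ∀ i j : Fin n, i ≠ j → μ (γ i '' Set.univ ∩ γ j '' Set.univ) = 0

theorem ProperContraction.continuous {K : Type*} [MetricSpace K] {g : K → K}
    (hg : ProperContraction g) : Continuous g := by
  obtain ⟨_, c, _, _, _, hc⟩ := hg
  exact (LipschitzWith.of_dist_le_mul (K := c.toNNReal) fun x y =>
    (hc x y).2.trans (by gcongr; exact Real.le_coe_toNNReal c)).continuous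

namespace IsHutchinsonMeasure

variable {K : Type*} [MetricSpace K] [MeasurableSpace K] {n : ℕ} {γ : Fin n → K → K}
  {μ : Measure K}

theorem eq_smul_sum_map (hμ : IsHutchinsonMeasure γ μ) (hγ : ∀ i, Measurable (γ i)) :
    μ = (n : ℝ≥0∞)⁻¹ • ∑ j, μ.map (γ j) := by
  ext E hE
  simp only [Measure.smul_apply, Measure.coe_finsetSum, Finset.sum_apply, smul_eq_mul,
    Measure.map_apply (hγ _) hE]
  exact hμ.2 E hE

theorem measurePreserving (hμ : IsHutchinsonMeasure γ μ) (hn : n ≠ 0) {φ : K → K}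
    (hφ : Measurable φ) (hbranch : ∀ i x, φ (γ i x) = x) : MeasurePreserving φ μ μ := by
  refine ⟨hφ, Measure.ext fun E hE => ?_⟩
  have hpre : ∀ i, γ i ⁻¹' (φ ⁻¹' E) = E := fun i => by ext x; simp [hbranch i x]
  rw [Measure.map_apply hφ hE, hμ.2 _ (hφ hE)]
  simp only [hpre, Finset.sum_const, Finset.card_univ, Fintype.card_fin, nsmul_eq_mul,
    ← mul_assoc, ENNReal.inv_mul_cancel (Nat.cast_ne_zero.mpr hn) (ENNReal.natCast_ne_top n),
    one_mul]

variable [CompactSpace K] [BorelSpace K]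

theorem integral_eq_integral_smul_sum (hμ : IsHutchinsonMeasure γ μ)
    (hγ : ∀ i, Continuous (γ i)) {E : Type*} [NormedAddCommGroup E] [NormedSpace ℝ E]
    {F : K → E} (hF : Continuous F) :
    ∫ x, F x ∂μ = ∫ x, (n : ℝ)⁻¹ • ∑ j, F (γ j x) ∂μ := by
  have := hμ.1
  rw [integral_smul, integral_finsetSum (f := fun j x => F (γ j x)) _ fun j _ =>
      (hF.comp (hγ j)).integrable_of_hasCompactSupport (.of_compactSpace _)]
  conv_lhs => rw [hμ.eq_smul_sum_map fun i => (hγ i).measurable]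
  rw [integral_smul_measure, integral_finsetSum_measure fun j _ =>
      (integrable_map_measure hF.aestronglyMeasurable (hγ j).aemeasurable).2
        ((hF.comp (hγ j)).integrable_of_hasCompactSupport (.of_compactSpace _))]
  simp only [ENNReal.toReal_inv, ENNReal.toReal_natCast,
    integral_map (hγ _).aemeasurable hF.aestronglyMeasurable]

end IsHutchinsonMeasure

/-- The transfer operator `L_φ`; it depends on `φ` only through its inverse branches `γ`. -/
@[simps]
def transferOperator {K : Type*} [TopologicalSpace K] {n : ℕ} (γ : Fin n → K → K)
    (hγ : ∀ i, Continuous (γ i)) (h : C(K, ℂ)) : C(K, ℂ) where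
  toFun x := (n : ℂ)⁻¹ * ∑ k, h (γ k x)
  continuous_toFun := by fun_prop

/-- The norm `‖η‖₂ = ‖L_φ(|η|²)‖_∞^{1/2}` of the Hilbert module `C(K)`. -/
def moduleNorm {K : Type*} [TopologicalSpace K] {n : ℕ} (γ : Fin n → K → K) (η : C(K, ℂ)) : ℝ :=
  √(⨆ x, (n : ℝ)⁻¹ * ∑ j, ‖η (γ j x)‖ ^ 2)

section L2

variable {K : Type*} [MeasurableSpace K] {μ : Measure K}

theorem eq_adjoint_of_ae_eq_mul {A B : Lp ℂ 2 μ →L[ℂ] Lp ℂ 2 μ} {b : K → ℂ}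
    (hA : ∀ f, A f =ᵐ[μ] fun x => b x * f x)
    (hB : ∀ f, B f =ᵐ[μ] fun x => star (b x) * f x) : B = ContinuousLinearMap.adjoint A := by
  refine (ContinuousLinearMap.eq_adjoint_iff B A).2 fun f g => ?_
  simp only [L2.inner_def, RCLike.inner_apply]
  refine integral_congr_ae ?_
  filter_upwards [hB f, hA g] with x hf hg
  simp only [hf, hg, map_mul, starRingEnd_apply, star_star]
  ring

variable [TopologicalSpace K] [CompactSpace K] [BorelSpace K] [IsFiniteMeasure μ]

theorem ContinuousMap.norm_toLp_sq (f : C(K, ℂ)) :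
    ‖ContinuousMap.toLp 2 μ ℂ f‖ ^ 2 = ∫ x, ‖f x‖ ^ 2 ∂μ := by
  rw [← RCLike.ofReal_inj (K := ℂ), RCLike.ofReal_pow, ← inner_self_eq_norm_sq_to_K,
    ContinuousMap.inner_toLp, ← integral_ofReal]
  simp [RCLike.mul_conj]

theorem apply_toLp_of_ae_eq_mul {A : Lp ℂ 2 μ →L[ℂ] Lp ℂ 2 μ} {b : C(K, ℂ)}
    (hA : ∀ f, A f =ᵐ[μ] fun x => b x * f x) (g : C(K, ℂ)) :
    A (ContinuousMap.toLp 2 μ ℂ g) = ContinuousMap.toLp 2 μ ℂ (b * g) := by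
  refine Lp.ext ?_
  filter_upwards [hA _, g.coeFn_toLp (p := 2) (𝕜 := ℂ) μ, (b * g).coeFn_toLp (p := 2) (𝕜 := ℂ) μ]
    with x hA hg hbg
  rw [hA, hg, hbg, ContinuousMap.mul_apply]

theorem apply_toLp_of_ae_eq_comp {C : Lp ℂ 2 μ →L[ℂ] Lp ℂ 2 μ} {φ : C(K, K)}
    (hφ : Measure.QuasiMeasurePreserving φ μ μ) (hC : ∀ f, C f =ᵐ[μ] fun x => f (φ x))
    (g : C(K, ℂ)) :
    C (ContinuousMap.toLp 2 μ ℂ g) = ContinuousMap.toLp 2 μ ℂ (g.comp φ) := by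
  refine Lp.ext ?_
  filter_upwards [hC _, hφ.ae_eq_comp (g.coeFn_toLp (p := 2) (𝕜 := ℂ) μ),
    (g.comp φ).coeFn_toLp (p := 2) (𝕜 := ℂ) μ] with x hC hg hgφ
  rw [hC, hgφ]
  exact hg

end L2

namespace ContinuousLinearMap

variable {𝕜 E : Type*} [RCLike 𝕜] [NormedAddCommGroup E] [InnerProductSpace 𝕜 E]

theorem isPositive_of_dense {T : E →L[𝕜] E} (hT : T.IsSymmetric) {s : Set E} (hs : Dense s)
    (h : ∀ v ∈ s, 0 ≤ T.reApplyInnerSelf v) : T.IsPositive :=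
  ⟨hT, hs.induction h (isClosed_le continuous_const T.reApplyInnerSelf_continuous)⟩

theorem reApplyInnerSelf_sum_range_le_of_tendsto {S : ℕ → E →L[𝕜] E}
    (hS : ∀ i, (S i).IsPositive) {v : E}
    (hv : Tendsto (fun N => (∑ i ∈ Finset.range N, S i) v) atTop (𝓝 v)) (N : ℕ) :
    (∑ i ∈ Finset.range N, S i).reApplyInnerSelf v ≤ (1 : E →L[𝕜] E).reApplyInnerSelf v := by
  have hmono : Monotone fun N => (∑ i ∈ Finset.range N, S i).reApplyInnerSelf v := by
    refine monotone_nat_of_le_succ fun N => ?_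
    simp only [reApplyInnerSelf_apply, Finset.sum_range_succ, add_apply, inner_add_left,
      map_add, le_add_iff_nonneg_right]
    exact (hS N).re_inner_nonneg_left v
  refine hmono.ge_of_tendsto ?_ N
  simp only [reApplyInnerSelf_apply]
  exact (RCLike.continuous_re.tendsto _).comp (hv.inner tendsto_const_nhds)

theorem isPositive_one_sub_sum_range_of_tendsto {S : ℕ → E →L[𝕜] E}
    (hS : ∀ i, (S i).IsPositive) {s : Set E} (hs : Dense s)
    (hv : ∀ v ∈ s, Tendsto (fun N => (∑ i ∈ Finset.range N, S i) v) atTop (𝓝 v)) (N : ℕ) :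
    (1 - ∑ i ∈ Finset.range N, S i).IsPositive := by
  refine isPositive_of_dense (isPositive_one.isSymmetric.sub
    (isPositive_sum _ fun i _ => hS i).isSymmetric) hs fun v hvs => ?_
  have := reApplyInnerSelf_sum_range_le_of_tendsto hS (hv v hvs) N
  simp only [reApplyInnerSelf_apply, sub_apply, inner_sub_left, map_sub] at this ⊢
  linarith

end ContinuousLinearMap

namespace IsHutchinsonMeasure

variable {K : Type*} [MetricSpace K] [CompactSpace K] [MeasurableSpace K] [BorelSpace K]
  {n : ℕ} {γ : Fin n → K → K} {μ : Measure K} [IsFiniteMeasure μ]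

theorem adjoint_apply_toLp (hμ : IsHutchinsonMeasure γ μ) (hγ : ∀ i, Continuous (γ i))
    {φ : C(K, K)} (hφ : Measure.QuasiMeasurePreserving φ μ μ) (hbranch : ∀ i x, φ (γ i x) = x)
    {C : Lp ℂ 2 μ →L[ℂ] Lp ℂ 2 μ} (hC : ∀ f, C f =ᵐ[μ] fun x => f (φ x)) (h : C(K, ℂ)) :
    ContinuousLinearMap.adjoint C (ContinuousMap.toLp 2 μ ℂ h) =
      ContinuousMap.toLp 2 μ ℂ (transferOperator γ hγ h) := by
  refine ext_inner_right ℂ fun v => ?_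
  rw [ContinuousLinearMap.adjoint_inner_left]
  refine congrFun ((ContinuousMap.toLp_denseRange ℂ μ ℂ (by norm_num)).equalizer
    (g := fun v => inner ℂ (ContinuousMap.toLp 2 μ ℂ h) (C v)) (continuous_const.inner C.continuous)
    (continuous_const.inner continuous_id)
    (funext fun G => ?_)) v
  simp only [Function.comp_apply, id_eq, apply_toLp_of_ae_eq_comp hφ hC, ContinuousMap.inner_toLp]
  rw [hμ.integral_eq_integral_smul_sum hγ (by fun_prop)]
  congr 1
  ext x
  simp [hbranch, Finset.mul_sum, mul_left_comm]

theorem norm_toLp_le_moduleNorm (hμ : IsHutchinsonMeasure γ μ) (hγ : ∀ i, Continuous (γ i))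
    (η : C(K, ℂ)) : ‖ContinuousMap.toLp 2 μ ℂ η‖ ≤ moduleNorm γ η := by
  have := hμ.1
  refine Real.le_sqrt_of_sq_le ?_
  have hF : Continuous fun x => (n : ℝ)⁻¹ * ∑ j, ‖η (γ j x)‖ ^ 2 := by fun_prop
  rw [ContinuousMap.norm_toLp_sq, hμ.integral_eq_integral_smul_sum hγ (by fun_prop)]
  calc _ ≤ ∫ _, ⨆ x, (n : ℝ)⁻¹ * ∑ j, ‖η (γ j x)‖ ^ 2 ∂μ :=
        integral_mono (hF.integrable_of_hasCompactSupport (.of_compactSpace _))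
          (integrable_const _) fun x => le_ciSup (isCompact_range hF).bddAbove x
    _ = _ := by simp

end IsHutchinsonMeasure

section BasisExpansion

variable {K : Type*} [MetricSpace K] [CompactSpace K] [MeasurableSpace K] [BorelSpace K]
  {n : ℕ} {γ : Fin n → K → K} {μ : Measure K} [IsFiniteMeasure μ]
  {C : Lp ℂ 2 μ →L[ℂ] Lp ℂ 2 μ} {M : C(K, ℂ) → (Lp ℂ 2 μ →L[ℂ] Lp ℂ 2 μ)}

theorem tendsto_sum_range_apply_toLp (hμ : IsHutchinsonMeasure γ μ)
    (hγ : ∀ i, Continuous (γ i)) {φ : C(K, K)} (hφ : Measure.QuasiMeasurePreserving φ μ μ)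
    (hbranch : ∀ i x, φ (γ i x) = x) (hC : ∀ f, C f =ᵐ[μ] fun x => f (φ x))
    (hM : ∀ b f, M b f =ᵐ[μ] fun x => b x * f x) (u : ℕ → C(K, ℂ)) {ξ : C(K, ℂ)}
    (hξ : Tendsto (fun N => moduleNorm γ
      ((∑ i ∈ Finset.range N, u i * (transferOperator γ hγ (star (u i) * ξ)).comp φ) - ξ))
      atTop (𝓝 0)) :
    Tendsto (fun N => (∑ i ∈ Finset.range N,
        (M (u i)).comp (C.comp ((ContinuousLinearMap.adjoint C).comp (M (star (u i))))))
          (ContinuousMap.toLp 2 μ ℂ ξ)) atTop (𝓝 (ContinuousMap.toLp 2 μ ℂ ξ)) := by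
  have hsum : ∀ N, (∑ i ∈ Finset.range N,
      (M (u i)).comp (C.comp ((ContinuousLinearMap.adjoint C).comp (M (star (u i))))))
        (ContinuousMap.toLp 2 μ ℂ ξ) = ContinuousMap.toLp 2 μ ℂ
          (∑ i ∈ Finset.range N, u i * (transferOperator γ hγ (star (u i) * ξ)).comp φ) := by
    intro N
    simp only [sum_apply, ContinuousLinearMap.comp_apply, map_sum,
      apply_toLp_of_ae_eq_mul (hM _), hμ.adjoint_apply_toLp hγ hφ hbranch hC,
      apply_toLp_of_ae_eq_comp hφ hC]
  rw [tendsto_iff_norm_sub_tendsto_zero]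
  refine squeeze_zero (fun _ => norm_nonneg _) (fun N => ?_) hξ
  rw [hsum, ← map_sub]
  exact hμ.norm_toLp_le_moduleNorm hγ _

end BasisExpansion

theorem TN_positive_and_le_one_general {K : Type*} [MetricSpace K] [CompactSpace K]
    [MeasurableSpace K] [BorelSpace K] {n : ℕ} (hn : 1 ≤ n)
    (γ : Fin n → K → K) (hγ : ∀ i, ProperContraction (γ i))
    (φ : K → K) (hφ : Continuous φ) (hbranch : ∀ (i : Fin n) (x : K), φ (γ i x) = x)
    (μ : Measure K) (hμ : IsHutchinsonMeasure γ μ)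
    (Cφ : Lp ℂ 2 μ →L[ℂ] Lp ℂ 2 μ)
    (hCφ : ∀ f : Lp ℂ 2 μ, (Cφ f : K → ℂ) =ᵐ[μ] fun x => f (φ x))
    (M : C(K, ℂ) → (Lp ℂ 2 μ →L[ℂ] Lp ℂ 2 μ))
    (hM : ∀ (b : C(K, ℂ)) (f : Lp ℂ 2 μ), (M b f : K → ℂ) =ᵐ[μ] fun x => b x * f x)
    (u : ℕ → C(K, ℂ))
    (hbasis : ∀ ξ : C(K, ℂ),
      Tendsto (fun N : ℕ => Real.sqrt (⨆ x : K, (n : ℝ)⁻¹ * ∑ j,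
          ‖(∑ i ∈ Finset.range N, u i (γ j x) *
              ((n : ℂ)⁻¹ * ∑ k, (starRingEnd ℂ) (u i (γ k (φ (γ j x)))) *
                ξ (γ k (φ (γ j x))))) - ξ (γ j x)‖ ^ 2))
        atTop (nhds 0))
    (N : ℕ) :
    (∑ i ∈ Finset.range N,
        (M (u i)).comp (Cφ.comp ((ContinuousLinearMap.adjoint Cφ).comp
          (M (star (u i)))))).IsPositive ∧
      (1 - ∑ i ∈ Finset.range N,
        (M (u i)).comp (Cφ.comp ((ContinuousLinearMap.adjoint Cφ).comp
          (M (star (u i)))))).IsPositive := by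
  have := hμ.1
  have hγc : ∀ i, Continuous (γ i) := fun i => (hγ i).continuous
  have hφμ := hμ.measurePreserving (by omega) hφ.measurable hbranch
  have hterm : ∀ i, ((M (u i)).comp (Cφ.comp ((ContinuousLinearMap.adjoint Cφ).comp
      (M (star (u i)))))).IsPositive := fun i => by
    simpa [ContinuousLinearMap.adjoint_comp, ContinuousLinearMap.comp_assoc,
      ← eq_adjoint_of_ae_eq_mul (hM (u i)) (hM (star (u i)))]
      using ContinuousLinearMap.isPositive_self_comp_adjoint ((M (u i)).comp Cφ)
  refine ⟨ContinuousLinearMap.isPositive_sum _ fun i _ => hterm i,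
    ContinuousLinearMap.isPositive_one_sub_sum_range_of_tendsto hterm
      (ContinuousMap.toLp_denseRange ℂ μ ℂ (by norm_num)) ?_ N⟩
  rintro _ ⟨ξ, rfl⟩
  refine tendsto_sum_range_apply_toLp (φ := ⟨φ, hφ⟩) hμ hγc hφμ.quasiMeasurePreserving hbranch
    hCφ hM u ?_
  simpa [moduleNorm, Finset.mul_sum] using hbasis ξ

/-- If `{uᵢ}` is a countable basis of the Hilbert bimodule `X = C(K)` (i.e. the partial sums
`∑_{i<N} uᵢ ⋅ ((L_φ(\overline{uᵢ} ξ)) ∘ φ)` converge to `ξ` in the norm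
`‖η‖₂ = ‖L_φ(|η|²)‖_∞^{1/2}`), then for every `N` the operator
`T_N = ∑_{i<N} M_{uᵢ} C_φ C_φ* M_{\overline{uᵢ}}` satisfies `0 ≤ T_N ≤ I`. -/
theorem TN_positive_and_le_one {K : Type*} [MetricSpace K] [CompactSpace K] [Nonempty K]
    [MeasurableSpace K] [BorelSpace K] {n : ℕ} (hn : 1 ≤ n)
    (γ : Fin n → K → K) (hγ : ∀ i, ProperContraction (γ i))
    (φ : K → K) (hφ : Continuous φ) (hbranch : ∀ (i : Fin n) (x : K), φ (γ i x) = x)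
    (hss : SelfSimilarSet γ) (hsep : MeasureSeparation γ)
    (μ : Measure K) (hμ : IsHutchinsonMeasure γ μ)
    (Cφ : Lp ℂ 2 μ →L[ℂ] Lp ℂ 2 μ)
    (hCφ : ∀ f : Lp ℂ 2 μ, (Cφ f : K → ℂ) =ᵐ[μ] fun x => f (φ x))
    (M : C(K, ℂ) → (Lp ℂ 2 μ →L[ℂ] Lp ℂ 2 μ))
    (hM : ∀ (b : C(K, ℂ)) (f : Lp ℂ 2 μ), (M b f : K → ℂ) =ᵐ[μ] fun x => b x * f x)
    (u : ℕ → C(K, ℂ))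
    (hbasis : ∀ ξ : C(K, ℂ),
      Tendsto (fun N : ℕ => Real.sqrt (⨆ x : K, (n : ℝ)⁻¹ * ∑ j,
          ‖(∑ i ∈ Finset.range N, u i (γ j x) *
              ((n : ℂ)⁻¹ * ∑ k, (starRingEnd ℂ) (u i (γ k (φ (γ j x)))) *
                ξ (γ k (φ (γ j x))))) - ξ (γ j x)‖ ^ 2))
        atTop (nhds 0))
    (N : ℕ) :
    (∑ i ∈ Finset.range N,
        (M (u i)).comp (Cφ.comp ((ContinuousLinearMap.adjoint Cφ).comp
          (M (star (u i)))))).IsPositive ∧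
      (1 - ∑ i ∈ Finset.range N,
        (M (u i)).comp (Cφ.comp ((ContinuousLinearMap.adjoint Cφ).comp
          (M (star (u i)))))).IsPositive :=
  TN_positive_and_le_one_general hn γ hγ φ hφ hbranch μ hμ Cφ hCφ M hM u hbasis N
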